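/- arXiv:2007.02387 — 6 statements merged into one kernel-verified Lean document; each statement's English description precedes it below -/
import Mathlib

section
/- Let a < b be real numbers and let f : ℝ → ℝ be convex on the closed interval [a, b]. Then for every finite sequence x₁, …, xₙ of real numbers all belonging to [a, b] (with n ≥ 1), one has (1/n) · ∑_{i=1}^n f(xᵢ) − f((1/n) · ∑_{i=1}^n xᵢ) ≤ f(a) + f(b) − 2 · f((a + b)/2). -/
open Finset

/-!
Every point of `[a, b]` lies below the chord of `f` over `[a, b]`; since the chord is affine, the
mean of the `f (x i)` lies below the chord at the mean `m`, so the Jensen gap is at most the height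
of the chord above `f` at `m`. Convexity at the midpoint of `m` and its reflection `a + b - m` gives
`2 f ((a + b) / 2) ≤ f m + f (a + b - m)`; bound `f (a + b - m)` by the chord as well, and note
that the chord values at `m` and `a + b - m` add up to `f a + f b`.
-/

section Chord

variable {𝕜 ι : Type*} [Field 𝕜] [LinearOrder 𝕜] [IsStrictOrderedRing 𝕜] {a b y : 𝕜} {f : 𝕜 → 𝕜}

theorem ConvexOn.sub_mul_le_chord (hf : ConvexOn 𝕜 (Set.Icc a b) f) (hy : y ∈ Set.Icc a b) :
    (b - a) * f y ≤ (b - y) * f a + (y - a) * f b := by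
  obtain ⟨hay, hyb⟩ := hy
  rcases (hay.trans hyb).eq_or_lt with rfl | hab
  · obtain rfl : y = a := le_antisymm hyb hay
    simp
  have hba : 0 < b - a := sub_pos.2 hab
  have key := hf.2 (Set.left_mem_Icc.2 hab.le) (Set.right_mem_Icc.2 hab.le)
    (div_nonneg (sub_nonneg.2 hyb) hba.le) (div_nonneg (sub_nonneg.2 hay) hba.le)
    (by field_simp; ring)
  have hcomb : ((b - y) / (b - a)) • a + ((y - a) / (b - a)) • b = y := by
    simp only [smul_eq_mul]; field
  rw [hcomb, smul_eq_mul, smul_eq_mul] at key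
  calc (b - a) * f y ≤ (b - a) * ((b - y) / (b - a) * f a + (y - a) / (b - a) * f b) := by gcongr
    _ = (b - y) * f a + (y - a) * f b := by field

theorem ConvexOn.sub_mul_sum_le_chord (hf : ConvexOn 𝕜 (Set.Icc a b) f) {t : Finset ι}
    {w x : ι → 𝕜} (hw₀ : ∀ i ∈ t, 0 ≤ w i) (hw₁ : ∑ i ∈ t, w i = 1)
    (hx : ∀ i ∈ t, x i ∈ Set.Icc a b) :
    (b - a) * ∑ i ∈ t, w i * f (x i) ≤
      (b - ∑ i ∈ t, w i * x i) * f a + (∑ i ∈ t, w i * x i - a) * f b := by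
  calc (b - a) * ∑ i ∈ t, w i * f (x i) = ∑ i ∈ t, w i * ((b - a) * f (x i)) := by
        rw [mul_sum]; exact sum_congr rfl fun i _ ↦ by ring
    _ ≤ ∑ i ∈ t, w i * ((b - x i) * f a + (x i - a) * f b) :=
        sum_le_sum fun i hi ↦ mul_le_mul_of_nonneg_left (hf.sub_mul_le_chord (hx i hi)) (hw₀ i hi)
    _ = (b - ∑ i ∈ t, w i * x i) * f a + (∑ i ∈ t, w i * x i - a) * f b := by
        have hlin : ∀ i ∈ t, w i * ((b - x i) * f a + (x i - a) * f b) =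
            (b * f a - a * f b) * w i + (f b - f a) * (w i * x i) := fun i _ ↦ by ring
        rw [sum_congr rfl hlin, sum_add_distrib, ← mul_sum, ← mul_sum, hw₁]
        ring

theorem ConvexOn.chord_sub_mul_le (hf : ConvexOn 𝕜 (Set.Icc a b) f) (hy : y ∈ Set.Icc a b) :
    (b - y) * f a + (y - a) * f b - (b - a) * f y ≤
      (b - a) * (f a + f b - 2 * f ((a + b) / 2)) := by
  have hy' : a + b - y ∈ Set.Icc a b := ⟨by linarith [hy.2], by linarith [hy.1]⟩
  have hmid : f ((a + b) / 2) ≤ 1 / 2 * f y + 1 / 2 * f (a + b - y) := by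
    have half : (0 : 𝕜) ≤ 1 / 2 := by norm_num
    calc f ((a + b) / 2) = f ((1 / 2 : 𝕜) • y + (1 / 2 : 𝕜) • (a + b - y)) := by
          simp only [smul_eq_mul]; ring_nf
      _ ≤ 1 / 2 * f y + 1 / 2 * f (a + b - y) := hf.2 hy hy' half half (add_halves 1)
  have hchord := hf.sub_mul_le_chord hy'
  have hba : 0 ≤ b - a := sub_nonneg.2 (hy.1.trans hy.2)
  linarith [mul_le_mul_of_nonneg_left hmid hba]

theorem ConvexOn.sum_mul_sub_map_sum_le (hf : ConvexOn 𝕜 (Set.Icc a b) f) (hab : a < b)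
    {t : Finset ι} {w x : ι → 𝕜} (hw₀ : ∀ i ∈ t, 0 ≤ w i) (hw₁ : ∑ i ∈ t, w i = 1)
    (hx : ∀ i ∈ t, x i ∈ Set.Icc a b) :
    ∑ i ∈ t, w i * f (x i) - f (∑ i ∈ t, w i * x i) ≤ f a + f b - 2 * f ((a + b) / 2) := by
  set m := ∑ i ∈ t, w i * x i
  have hm : m ∈ Set.Icc a b := by
    simpa only [smul_eq_mul] using (convex_Icc a b).sum_mem hw₀ hw₁ hx
  refine le_of_mul_le_mul_left ?_ (sub_pos.2 hab)
  calc (b - a) * (∑ i ∈ t, w i * f (x i) - f m)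
      = (b - a) * ∑ i ∈ t, w i * f (x i) - (b - a) * f m := mul_sub _ _ _
    _ ≤ (b - m) * f a + (m - a) * f b - (b - a) * f m :=
        sub_le_sub_right (hf.sub_mul_sum_le_chord hw₀ hw₁ hx) _
    _ ≤ (b - a) * (f a + f b - 2 * f ((a + b) / 2)) := hf.chord_sub_mul_le hm

end Chord

/-- Simić's global bound on the Jensen gap: for `f` convex on `[a, b]` and any finite
sequence `x₁, …, xₙ` of points of `[a, b]` (with `n ≥ 1`), the difference between the mean
of the values of `f` and the value of `f` at the mean is at most
`f a + f b − 2 · f ((a + b) / 2)`. -/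
theorem jensen_gap_global_bound (a b : ℝ) (hab : a < b) (f : ℝ → ℝ)
    (hf : ConvexOn ℝ (Set.Icc a b) f) (n : ℕ) (hn : 1 ≤ n) (x : Fin n → ℝ)
    (hx : ∀ i, x i ∈ Set.Icc a b) :
    (1 / (n : ℝ)) * ∑ i, f (x i) - f ((1 / (n : ℝ)) * ∑ i, x i) ≤
      f a + f b - 2 * f ((a + b) / 2) := by
  have hw₁ : ∑ _i : Fin n, 1 / (n : ℝ) = 1 := by
    rw [sum_const, card_univ, Fintype.card_fin, nsmul_eq_mul, mul_one_div_cancel]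
    exact Nat.cast_ne_zero.2 (Nat.one_le_iff_ne_zero.1 hn)
  rw [mul_sum, mul_sum]
  exact hf.sum_mul_sub_map_sum_le hab (fun _ _ ↦ by positivity) hw₁ fun i _ ↦ hx i
end

section
/- Let 0 < a ≤ b be real numbers and let t₁, …, tₙ be real numbers (n ≥ 1) such that a ≤ exp(tᵢ) ≤ b for every i. Then −(1/n) · ∑_{i=1}^n tᵢ + log((1/n) · ∑_{i=1}^n exp(tᵢ)) ≤ −log a − log b + 2 · log((a + b)/2). -/
open Finset Real

/-!
A convex `f` on `[a, b]` lies below its chord `ℓ`, which is affine, so the Jensen gap at points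
`xᵢ ∈ [a, b]` with mean `c` is at most `ℓ c - f c`. The chord gap `ℓ - f` at `x` is at most
twice the one at the midpoint `m`: since `m` is the midpoint of `x` and its reflection `a + b - x`,
convexity at `m` trades `f m` for the average of `f x` and `f (a + b - x)`, and the chord gap at the
reflection is nonnegative. Twice the chord gap at `m` is `f a + f b - 2 f m`.
-/

namespace ConvexOn

variable {f : ℝ → ℝ} {a b x : ℝ}

theorem mul_le_chord (hf : ConvexOn ℝ (Set.Icc a b) f) (hx : x ∈ Set.Icc a b) :
    (b - a) * f x ≤ (b - x) * f a + (x - a) * f b := by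
  obtain ⟨hax, hxb⟩ := hx
  rcases hax.trans hxb |>.lt_or_eq with hab | rfl
  · have hba : 0 < b - a := sub_pos.2 hab
    have hcomb : ((b - x) / (b - a)) • a + ((x - a) / (b - a)) • b = x := by
      simp only [smul_eq_mul]; field_simp; ring
    have := hf.2 (Set.left_mem_Icc.2 hab.le) (Set.right_mem_Icc.2 hab.le)
      (div_nonneg (sub_nonneg.2 hxb) hba.le) (div_nonneg (sub_nonneg.2 hax) hba.le)
      (by field_simp; ring)
    rw [hcomb, smul_eq_mul, smul_eq_mul] at this
    calc (b - a) * f x ≤ (b - a) * ((b - x) / (b - a) * f a + (x - a) / (b - a) * f b) :=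
          mul_le_mul_of_nonneg_left this hba.le
      _ = (b - x) * f a + (x - a) * f b := by field_simp
  · obtain rfl : x = a := le_antisymm hxb hax
    simp

theorem chord_sub_mul_le_s1 (hf : ConvexOn ℝ (Set.Icc a b) f) (hx : x ∈ Set.Icc a b) :
    (b - x) * f a + (x - a) * f b - (b - a) * f x ≤
      (b - a) * (f a + f b - 2 * f ((a + b) / 2)) := by
  have hx' : a + b - x ∈ Set.Icc a b := ⟨by linarith [hx.2], by linarith [hx.1]⟩
  have hmid : f ((a + b) / 2) ≤ (f x + f (a + b - x)) / 2 :=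
    calc f ((a + b) / 2) = f ((1 / 2 : ℝ) • x + (1 / 2 : ℝ) • (a + b - x)) := by
          simp only [smul_eq_mul]; ring_nf
      _ ≤ (1 / 2 : ℝ) • f x + (1 / 2 : ℝ) • f (a + b - x) :=
          hf.2 hx hx' (by norm_num) (by norm_num) (by norm_num)
      _ = (f x + f (a + b - x)) / 2 := by simp only [smul_eq_mul]; ring
  have hba : 0 ≤ b - a := by linarith [hx.1, hx.2]
  linarith [hf.mul_le_chord hx', mul_le_mul_of_nonneg_left hmid hba]

theorem sum_mul_sub_map_sum_le_s1 {ι : Type*} {s : Finset ι} {w x : ι → ℝ}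
    (hf : ConvexOn ℝ (Set.Icc a b) f) (hw₀ : ∀ i ∈ s, 0 ≤ w i) (hw₁ : ∑ i ∈ s, w i = 1)
    (hx : ∀ i ∈ s, x i ∈ Set.Icc a b) :
    ∑ i ∈ s, w i * f (x i) - f (∑ i ∈ s, w i * x i) ≤ f a + f b - 2 * f ((a + b) / 2) := by
  set c := ∑ i ∈ s, w i * x i
  have hc : c ∈ Set.Icc a b := (convex_Icc a b).sum_mem hw₀ hw₁ hx
  rcases hc.1.trans hc.2 |>.lt_or_eq with hab | rfl
  · have hchord : (b - a) * ∑ i ∈ s, w i * f (x i) ≤ (b - c) * f a + (c - a) * f b :=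
      calc (b - a) * ∑ i ∈ s, w i * f (x i) = ∑ i ∈ s, w i * ((b - a) * f (x i)) := by
            rw [mul_sum]; exact sum_congr rfl fun i _ => by ring
        _ ≤ ∑ i ∈ s, w i * ((b - x i) * f a + (x i - a) * f b) :=
            sum_le_sum fun i hi => mul_le_mul_of_nonneg_left (hf.mul_le_chord (hx i hi)) (hw₀ i hi)
        _ = ∑ i ∈ s, (w i * (b * f a - a * f b) + w i * x i * (f b - f a)) :=
            sum_congr rfl fun i _ => by ring
        _ = (b - c) * f a + (c - a) * f b := by
            rw [sum_add_distrib, ← sum_mul, ← sum_mul, hw₁]; ring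
    refine le_of_mul_le_mul_left ?_ (sub_pos.2 hab)
    linarith [hf.chord_sub_mul_le_s1 hc]
  · have hca : c = a := le_antisymm hc.2 hc.1
    have hfx : ∑ i ∈ s, w i * f (x i) = f a := by
      rw [sum_congr rfl fun i hi => by rw [le_antisymm (hx i hi).2 (hx i hi).1], ← sum_mul, hw₁,
        one_mul]
    rw [hfx, hca, add_self_div_two]
    linarith

end ConvexOn

theorem neg_log_jensen_gap_bound_general (a b : ℝ) (ha : 0 < a) (n : ℕ) (hn : 1 ≤ n)
    (t : Fin n → ℝ) (ht : ∀ i, a ≤ Real.exp (t i) ∧ Real.exp (t i) ≤ b) :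
    -((1 / (n : ℝ)) * ∑ i, t i) + Real.log ((1 / (n : ℝ)) * ∑ i, Real.exp (t i)) ≤
      -Real.log a - Real.log b + 2 * Real.log ((a + b) / 2) := by
  have hf : ConvexOn ℝ (Set.Icc a b) (-Real.log) :=
    (strictConcaveOn_log_Ioi.concaveOn.subset (fun x hx ↦ ha.trans_le hx.1) (convex_Icc a b)).neg
  have hw₁ : ∑ _i : Fin n, 1 / (n : ℝ) = 1 := by
    rw [sum_const, card_univ, Fintype.card_fin, nsmul_eq_mul,
      mul_one_div_cancel (Nat.cast_ne_zero.2 (by omega))]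
  have := hf.sum_mul_sub_map_sum_le_s1 (fun _ _ ↦ by positivity) hw₁ fun i _ ↦ ht i
  simp only [Pi.neg_apply, log_exp, mul_neg, sum_neg_distrib, ← mul_sum] at this
  linarith

/-- Intermediate step of Corollary 1: applying the global Jensen-gap bound to `f = −log`
on `[a, b]` with `xᵢ = exp tᵢ`. -/
theorem neg_log_jensen_gap_bound (a b : ℝ) (ha : 0 < a) (hab : a ≤ b) (n : ℕ) (hn : 1 ≤ n)
    (t : Fin n → ℝ) (ht : ∀ i, a ≤ Real.exp (t i) ∧ Real.exp (t i) ≤ b) :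
    -((1 / (n : ℝ)) * ∑ i, t i) + Real.log ((1 / (n : ℝ)) * ∑ i, Real.exp (t i)) ≤
      -Real.log a - Real.log b + 2 * Real.log ((a + b) / 2) :=
  neg_log_jensen_gap_bound_general a b ha n hn t ht
end

section
/- Let 0 < a ≤ b be real numbers and let t₁, …, tₙ be real numbers (n ≥ 1) such that a ≤ exp(tᵢ) ≤ b for every i. Then log(∑_{i=1}^n exp(tᵢ)) ≤ (1/n) · ∑_{i=1}^n tᵢ + log n − log a − log b + 2 · log((a + b)/2). -/
/-!
Write `xᵢ = exp tᵢ ∈ [a, b]`. From `(xᵢ - a)(b - xᵢ) ≥ 0` we get `xᵢ + ab/xᵢ ≤ a + b`; summing and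
applying AM-GM to `∑ xᵢ` and `ab ∑ 1/xᵢ` gives Schweitzer's inequality
`(∑ xᵢ)(∑ 1/xᵢ) ≤ n²(a + b)²/(4ab)`. Jensen's inequality for `exp` bounds `∑ 1/xᵢ = ∑ exp (-tᵢ)`
below by `n exp (-t̄)`, where `t̄` is the mean of the `tᵢ`, so `∑ xᵢ ≤ n (a + b)²/(4ab) · exp t̄`.
Taking logarithms gives the bound.
-/

open Finset Real

theorem add_mul_div_le_add_of_mem_Icc {a b x : ℝ} (hx : x ∈ Set.Icc a b) (ha : 0 < a) :
    x + a * b / x ≤ a + b := by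
  obtain ⟨hax, hxb⟩ := hx
  have hx0 : 0 < x := ha.trans_le hax
  rw [← sub_nonneg]
  have hfactor : a + b - (x + a * b / x) = (x - a) * (b - x) / x := by field_simp; ring
  rw [hfactor]
  exact div_nonneg (mul_nonneg (sub_nonneg.2 hax) (sub_nonneg.2 hxb)) hx0.le

/-- Schweitzer's inequality. -/
theorem sum_mul_sum_inv_le_of_mem_Icc {ι : Type*} (s : Finset ι) {f : ι → ℝ} {a b : ℝ}
    (ha : 0 < a) (hf : ∀ i ∈ s, f i ∈ Set.Icc a b) :
    (∑ i ∈ s, f i) * ∑ i ∈ s, (f i)⁻¹ ≤ (#s : ℝ) ^ 2 * (a + b) ^ 2 / (4 * (a * b)) := by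
  obtain rfl | hs := s.eq_empty_or_nonempty
  · simp
  obtain ⟨i₀, hi₀⟩ := hs
  have hb : 0 < b := ha.trans_le ((hf i₀ hi₀).1.trans (hf i₀ hi₀).2)
  have hsum : (∑ i ∈ s, f i) + a * b * ∑ i ∈ s, (f i)⁻¹ ≤ #s * (a + b) := by
    rw [mul_sum, ← sum_add_distrib, ← nsmul_eq_mul, ← sum_const]
    exact sum_le_sum fun i hi ↦ by
      simpa [div_eq_mul_inv] using add_mul_div_le_add_of_mem_Icc (hf i hi) ha
  set S := ∑ i ∈ s, f i
  set T := a * b * ∑ i ∈ s, (f i)⁻¹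
  have hS : 0 ≤ S := sum_nonneg fun i hi ↦ ha.le.trans (hf i hi).1
  have hT : 0 ≤ T := by
    refine mul_nonneg (by positivity) (sum_nonneg fun i hi ↦ ?_)
    exact inv_nonneg.2 (ha.le.trans (hf i hi).1)
  -- AM-GM: `S T ≤ ((S + T) / 2) ^ 2`
  rw [le_div_iff₀ (by positivity)]
  nlinarith [sq_nonneg (S - T)]

theorem card_mul_exp_sum_div_card_le_sum_exp {ι : Type*} {s : Finset ι} (hs : s.Nonempty)
    (u : ι → ℝ) : #s * exp ((∑ i ∈ s, u i) / #s) ≤ ∑ i ∈ s, exp (u i) := by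
  have hcard : (0 : ℝ) < #s := by exact_mod_cast hs.card_pos
  have := convexOn_exp.map_sum_le (t := s) (w := fun _ ↦ (#s : ℝ)⁻¹) (p := u)
    (fun _ _ ↦ by positivity) (by simp [hcard.ne']) (fun _ _ ↦ Set.mem_univ _)
  simp only [smul_eq_mul, ← mul_sum] at this
  rw [div_eq_inv_mul]
  calc _ ≤ #s * ((#s : ℝ)⁻¹ * ∑ i ∈ s, exp (u i)) := by gcongr
    _ = _ := by field_simp

theorem sum_exp_le_of_exp_mem_Icc {ι : Type*} {s : Finset ι} (hs : s.Nonempty) {t : ι → ℝ}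
    {a b : ℝ} (ha : 0 < a) (ht : ∀ i ∈ s, exp (t i) ∈ Set.Icc a b) :
    ∑ i ∈ s, exp (t i) ≤ #s * ((a + b) / 2) ^ 2 / (a * b) * exp ((∑ i ∈ s, t i) / #s) := by
  obtain ⟨i₀, hi₀⟩ := hs
  have hb : 0 < b := ha.trans_le ((ht i₀ hi₀).1.trans (ht i₀ hi₀).2)
  have hcard : (0 : ℝ) < #s := by exact_mod_cast card_pos.2 ⟨i₀, hi₀⟩
  have hschweitzer := sum_mul_sum_inv_le_of_mem_Icc s ha ht
  have hjensen := card_mul_exp_sum_div_card_le_sum_exp ⟨i₀, hi₀⟩ (fun i ↦ -t i)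
  simp only [← exp_neg, sum_neg_distrib, neg_div] at hschweitzer hjensen
  calc ∑ i ∈ s, exp (t i)
      ≤ (#s : ℝ) ^ 2 * (a + b) ^ 2 / (4 * (a * b)) / ∑ i ∈ s, exp (-t i) := by
        rw [le_div_iff₀ (sum_pos (fun i _ ↦ exp_pos _) ⟨i₀, hi₀⟩)]; exact hschweitzer
    _ ≤ (#s : ℝ) ^ 2 * (a + b) ^ 2 / (4 * (a * b)) / (#s * exp (-((∑ i ∈ s, t i) / #s))) := by
        gcongr
    _ = _ := by rw [exp_neg]; field_simp; ring

theorem log_sum_exp_upper_bound_general (a b : ℝ) (ha : 0 < a) (n : ℕ) (hn : 1 ≤ n)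
    (t : Fin n → ℝ) (ht : ∀ i, a ≤ Real.exp (t i) ∧ Real.exp (t i) ≤ b) :
    Real.log (∑ i, Real.exp (t i)) ≤
      (1 / (n : ℝ)) * ∑ i, t i + Real.log n - Real.log a - Real.log b +
        2 * Real.log ((a + b) / 2) := by
  have hne : (univ : Finset (Fin n)).Nonempty := univ_nonempty_iff.2 (Fin.pos_iff_nonempty.1 hn)
  have hb : 0 < b := ha.trans_le ((ht ⟨0, hn⟩).1.trans (ht ⟨0, hn⟩).2)
  have hbound := sum_exp_le_of_exp_mem_Icc hne ha fun i _ ↦ ht i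
  rw [card_univ, Fintype.card_fin] at hbound
  calc Real.log (∑ i, exp (t i))
      ≤ Real.log (n * ((a + b) / 2) ^ 2 / (a * b) * exp ((∑ i, t i) / n)) :=
        log_le_log (sum_pos (fun i _ ↦ exp_pos _) hne) hbound
    _ = _ := by
        have hn0 : (n : ℝ) ≠ 0 := by positivity
        rw [log_mul (by positivity) (exp_ne_zero _), log_exp, log_div (by positivity) (by positivity),
          log_mul hn0 (by positivity), log_pow, log_mul ha.ne' hb.ne']
        push_cast
        ring

/-- Corollary 1: upper bound on the log-sum-exp of logits `tᵢ` by their average plus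
constants depending only on `n` and an interval `[a, b]` containing all `exp tᵢ`. -/
theorem log_sum_exp_upper_bound (a b : ℝ) (ha : 0 < a) (hab : a ≤ b) (n : ℕ) (hn : 1 ≤ n)
    (t : Fin n → ℝ) (ht : ∀ i, a ≤ Real.exp (t i) ∧ Real.exp (t i) ≤ b) :
    Real.log (∑ i, Real.exp (t i)) ≤
      (1 / (n : ℝ)) * ∑ i, t i + Real.log n - Real.log a - Real.log b +
        2 * Real.log ((a + b) / 2) :=
  log_sum_exp_upper_bound_general a b ha n hn t ht
end

section
/- Let S be a nonempty finite set (support sentences), T a nonempty finite set of size N (relations), y : S → T a labeling, e : S → E an assignment of encodings in a real inner product space E, v : T → E prototype vectors, h : T → E graph-based relation embeddings, and K > 0 a real number. Suppose 0 < a ≤ b are real numbers with a ≤ exp(⟪e(s), v(r)⟫) ≤ b for all s ∈ S and r ∈ T. Then (1/K) · ∑_{s ∈ S} ⟪e(s), v(y(s))⟫ − (1/K) · ∑_{s ∈ S} log(∑_{r ∈ T} exp(⟪e(s), v(r)⟫)) − (1/2) · ∑_{r ∈ T} ‖v(r) − h(r)‖² ≥ (1/K) · ∑_{s ∈ S} ⟪e(s),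 v(y(s))⟫ − (1/K) · ∑_{s ∈ S} ((1/N) · ∑_{r ∈ T} ⟪e(s), v(r)⟫ + log N − log a − log b + 2 · log((a + b)/2)) − (1/2) · ∑_{r ∈ T} ‖v(r) − h(r)‖². -/
/-!
If `a ≤ tᵢ ≤ b` with `a > 0`, then `tᵢ + ab/tᵢ ≤ a + b`; summing and applying AM–GM to
`X = ∑ tᵢ` and `ab·Y` with `Y = ∑ 1/tᵢ` gives Kantorovich's inequality `4ab·XY ≤ n²(a+b)²`.
For `tᵢ = exp xᵢ`, Jensen's inequality for `exp` gives `Y ≥ n·exp(-x̄)`, hence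
`X ≤ n·exp(x̄)·((a+b)/2)²/(ab)`, and taking logarithms bounds each log-partition term.
-/

open Finset Real
open scoped RealInnerProductSpace

theorem add_mul_inv_le_add {a b t : ℝ} (ha : 0 < a) (hat : a ≤ t) (htb : t ≤ b) :
    t + a * b * t⁻¹ ≤ a + b := by
  have ht : 0 < t := ha.trans_le hat
  have hdiff : a + b - (t + a * b * t⁻¹) = (t - a) * (b - t) / t := by
    field_simp
    ring
  have : 0 ≤ (t - a) * (b - t) / t :=
    div_nonneg (mul_nonneg (sub_nonneg.2 hat) (sub_nonneg.2 htb)) ht.le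
  linarith

theorem sum_mul_sum_inv_le {ι : Type*} (s : Finset ι) (t : ι → ℝ) {a b : ℝ} (ha : 0 < a)
    (ht : ∀ i ∈ s, a ≤ t i ∧ t i ≤ b) :
    4 * (a * b) * ((∑ i ∈ s, t i) * ∑ i ∈ s, (t i)⁻¹) ≤ (#s * (a + b)) ^ 2 := by
  have hsplit : ∑ i ∈ s, t i + a * b * ∑ i ∈ s, (t i)⁻¹ = ∑ i ∈ s, (t i + a * b * (t i)⁻¹) := by
    rw [sum_add_distrib, mul_sum]
  have hnonneg : 0 ≤ ∑ i ∈ s, t i + a * b * ∑ i ∈ s, (t i)⁻¹ := by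
    rw [hsplit]
    refine sum_nonneg fun i hi => ?_
    have hti : 0 < t i := ha.trans_le (ht i hi).1
    have hb : 0 < b := hti.trans_le (ht i hi).2
    positivity
  have hle : ∑ i ∈ s, t i + a * b * ∑ i ∈ s, (t i)⁻¹ ≤ #s * (a + b) := by
    rw [hsplit, ← nsmul_eq_mul, ← sum_const]
    exact sum_le_sum fun i hi => add_mul_inv_le_add ha (ht i hi).1 (ht i hi).2
  calc 4 * (a * b) * ((∑ i ∈ s, t i) * ∑ i ∈ s, (t i)⁻¹)
      = 4 * (∑ i ∈ s, t i) * (a * b * ∑ i ∈ s, (t i)⁻¹) := by ring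
    _ ≤ (∑ i ∈ s, t i + a * b * ∑ i ∈ s, (t i)⁻¹) ^ 2 := four_mul_le_sq_add _ _
    _ ≤ (#s * (a + b)) ^ 2 := pow_le_pow_left₀ hnonneg hle 2

theorem exp_sum_div_card_le {ι : Type*} {s : Finset ι} (hs : s.Nonempty) (x : ι → ℝ) :
    exp ((∑ i ∈ s, x i) / #s) ≤ (∑ i ∈ s, exp (x i)) / #s := by
  have hcard : (0 : ℝ) < #s := by exact_mod_cast hs.card_pos
  have hjensen := convexOn_exp.map_sum_le (t := s) (w := fun _ => (#s : ℝ)⁻¹) (p := x)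
    (fun _ _ => by positivity) (by simp [hcard.ne']) (fun _ _ => Set.mem_univ _)
  simpa only [smul_eq_mul, inv_mul_eq_div, ← sum_div] using hjensen

theorem sum_exp_le {ι : Type*} {s : Finset ι} (hs : s.Nonempty) (x : ι → ℝ) {a b : ℝ}
    (ha : 0 < a) (hx : ∀ i ∈ s, a ≤ exp (x i) ∧ exp (x i) ≤ b) :
    ∑ i ∈ s, exp (x i) ≤ #s * exp (1 / #s * ∑ i ∈ s, x i) * ((a + b) / 2) ^ 2 / (a * b) := by
  obtain ⟨j, hj⟩ := hs
  have hb : 0 < b := (exp_pos _).trans_le (hx j hj).2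
  have hn : (0 : ℝ) < #s := by exact_mod_cast card_pos.2 ⟨j, hj⟩
  set m := 1 / (#s : ℝ) * ∑ i ∈ s, x i
  set X := ∑ i ∈ s, exp (x i)
  have hjensen : (#s : ℝ) ≤ exp m * ∑ i ∈ s, (exp (x i))⁻¹ := by
    have := exp_sum_div_card_le ⟨j, hj⟩ (fun i => -x i)
    have hm : (∑ i ∈ s, x i) / #s = m := (one_div_mul_eq_div _ _).symm
    simp only [sum_neg_distrib, neg_div, exp_neg] at this
    rw [hm, le_div_iff₀ hn] at this
    calc (#s : ℝ) = exp m * ((exp m)⁻¹ * #s) := (mul_inv_cancel_left₀ (exp_ne_zero m) _).symm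
      _ ≤ exp m * ∑ i ∈ s, (exp (x i))⁻¹ := by gcongr
  have h4 : 4 * #s * (X * (a * b)) ≤ 4 * #s * (#s * exp m * ((a + b) / 2) ^ 2) :=
    calc 4 * #s * (X * (a * b)) ≤ 4 * (exp m * ∑ i ∈ s, (exp (x i))⁻¹) * (X * (a * b)) := by
          gcongr
      _ = exp m * (4 * (a * b) * (X * ∑ i ∈ s, (exp (x i))⁻¹)) := by ring
      _ ≤ exp m * (#s * (a + b)) ^ 2 :=
        mul_le_mul_of_nonneg_left (sum_mul_sum_inv_le s _ ha hx) (exp_pos m).le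
      _ = 4 * #s * (#s * exp m * ((a + b) / 2) ^ 2) := by ring
  rw [le_div_iff₀ (by positivity)]
  exact le_of_mul_le_mul_left h4 (by positivity)

theorem log_sum_exp_le {ι : Type*} {s : Finset ι} (hs : s.Nonempty) (x : ι → ℝ) {a b : ℝ}
    (ha : 0 < a) (hx : ∀ i ∈ s, a ≤ exp (x i) ∧ exp (x i) ≤ b) :
    log (∑ i ∈ s, exp (x i)) ≤
      1 / #s * ∑ i ∈ s, x i + log #s - log a - log b + 2 * log ((a + b) / 2) := by
  obtain ⟨j, hj⟩ := id hs
  have hb : 0 < b := (exp_pos _).trans_le (hx j hj).2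
  have hn : (0 : ℝ) < #s := by exact_mod_cast hs.card_pos
  set m := 1 / (#s : ℝ) * ∑ i ∈ s, x i
  calc log (∑ i ∈ s, exp (x i)) ≤ log (#s * exp m * ((a + b) / 2) ^ 2 / (a * b)) :=
        log_le_log (sum_pos (fun i _ => exp_pos _) hs) (sum_exp_le hs x ha hx)
    _ = m + log #s - log a - log b + 2 * log ((a + b) / 2) := by
      rw [log_div (by positivity) (by positivity), log_mul (by positivity) (by positivity),
        log_mul hn.ne' (exp_pos m).ne', log_exp, log_pow, log_mul ha.ne' hb.ne']
      push_cast
      ring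

theorem log_posterior_lower_bound_general {S T E : Type*} [Fintype S] [Fintype T]
    [Nonempty T] [NormedAddCommGroup E] [InnerProductSpace ℝ E]
    (N : ℕ) (hN : Fintype.card T = N) (y : S → T) (e : S → E) (v : T → E) (h : T → E)
    (K : ℝ) (hK : 0 < K) (a b : ℝ) (ha : 0 < a)
    (hbound : ∀ (s : S) (r : T), a ≤ Real.exp ⟪e s, v r⟫ ∧ Real.exp ⟪e s, v r⟫ ≤ b) :
    (1 / K) * ∑ s, ⟪e s, v (y s)⟫ -
        (1 / K) * ∑ s, Real.log (∑ r, Real.exp ⟪e s, v r⟫) -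
        (1 / 2) * ∑ r, ‖v r - h r‖ ^ 2 ≥
      (1 / K) * ∑ s, ⟪e s, v (y s)⟫ -
        (1 / K) * ∑ s, ((1 / (N : ℝ)) * ∑ r, ⟪e s, v r⟫ + Real.log N - Real.log a -
          Real.log b + 2 * Real.log ((a + b) / 2)) -
        (1 / 2) * ∑ r, ‖v r - h r‖ ^ 2 := by
  have hlog : ∀ s, log (∑ r, exp ⟪e s, v r⟫) ≤ 1 / (N : ℝ) * ∑ r, ⟪e s, v r⟫ + log N - log a -
      log b + 2 * log ((a + b) / 2) := fun s => by
    simpa only [card_univ, hN] using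
      log_sum_exp_le univ_nonempty (fun r => ⟪e s, v r⟫) ha fun r _ => hbound s r
  have hsum := mul_le_mul_of_nonneg_left (sum_le_sum fun s (_ : s ∈ univ) => hlog s)
    (one_div_nonneg.2 hK.le)
  linarith

/-- Appendix lower bound on the normalized log-posterior of the prototype vectors:
each log-partition term is replaced by the average logit plus the constant
`log N − log a − log b + 2 log((a+b)/2)` from Corollary 1. -/
theorem log_posterior_lower_bound {S T E : Type*} [Fintype S] [Fintype T]
    [Nonempty S] [Nonempty T] [NormedAddCommGroup E] [InnerProductSpace ℝ E]
    (N : ℕ) (hN : Fintype.card T = N) (y : S → T) (e : S → E) (v : T → E) (h : T → E)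
    (K : ℝ) (hK : 0 < K) (a b : ℝ) (ha : 0 < a) (hab : a ≤ b)
    (hbound : ∀ (s : S) (r : T), a ≤ Real.exp ⟪e s, v r⟫ ∧ Real.exp ⟪e s, v r⟫ ≤ b) :
    (1 / K) * ∑ s, ⟪e s, v (y s)⟫ -
        (1 / K) * ∑ s, Real.log (∑ r, Real.exp ⟪e s, v r⟫) -
        (1 / 2) * ∑ r, ‖v r - h r‖ ^ 2 ≥
      (1 / K) * ∑ s, ⟪e s, v (y s)⟫ -
        (1 / K) * ∑ s, ((1 / (N : ℝ)) * ∑ r, ⟪e s, v r⟫ + Real.log N - Real.log a -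
          Real.log b + 2 * Real.log ((a + b) / 2)) -
        (1 / 2) * ∑ r, ‖v r - h r‖ ^ 2 :=
  log_posterior_lower_bound_general N hN y e v h K hK a b ha hbound
end

section
/- Consider an N-way K-shot support set: let T be a nonempty finite set of size N, K a positive natural number, S a finite set with labeling y : S → T such that each relation r ∈ T has exactly K support elements (i.e., the fiber y⁻¹(r) has cardinality K for every r ∈ T), encodings e : S → E in a real inner product space E, prototype vectors v : T → E, and embeddings h : T → E. Define m = (1/(N·K)) · ∑_{s ∈ S} e(s) and, for each r ∈ T, m_r = (1/K) · ∑_{s ∈ S, y(s) = r} e(s). Then (1/K) · ∑_{s ∈ S} ⟪e(s), v(y(s))⟫ − (1/K) · ∑_{s ∈ S} (1/N) · ∑_{r ∈ T} ⟪e(s), v(r)⟫ − (1/2) · ∑_{r ∈ T} ‖v(r) − h(r)‖² = ∑_{r ∈ T} (−(1/2) · ‖v(r) − (m_r + h(r) − m)‖²) + ∑_{r ∈ T} ((1/2) · ‖m_r + h(r) − m‖² − (1/2) · ‖h(r)‖²). -/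
open Finset Real
open scoped RealInnerProductSpace

/-! Grouping the support set by label turns the first sum into `∑ r, ⟪m_r, v r⟫` and the second
into `∑ r, ⟪m, v r⟫`; what remains is completing the square in each `v r`. -/

section

variable {E : Type*} [NormedAddCommGroup E] [InnerProductSpace ℝ E]

theorem inner_sub_half_norm_sub_sq (c v h : E) :
    ⟪c, v⟫ - 1 / 2 * ‖v - h‖ ^ 2 =
      -(1 / 2) * ‖v - (c + h)‖ ^ 2 + (1 / 2 * ‖c + h‖ ^ 2 - 1 / 2 * ‖h‖ ^ 2) := by
  simp only [norm_sub_sq_real, norm_add_sq_real, inner_add_right, real_inner_comm v c]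
  ring

theorem sum_inner_comp_eq_sum_inner_sum_fiber {S T : Type*} [Fintype S] [Fintype T]
    [DecidableEq T] (y : S → T) (e : S → E) (v : T → E) :
    ∑ s, ⟪e s, v (y s)⟫ = ∑ r, ⟪∑ s ∈ univ.filter (fun s => y s = r), e s, v r⟫ := by
  rw [← sum_fiberwise univ y]
  refine sum_congr rfl fun r _ => ?_
  rw [sum_inner]
  exact sum_congr rfl fun s hs => by rw [(mem_filter.mp hs).2]

end

theorem quadratic_lower_bound_rewriting_general {S T E : Type*} [Fintype S] [Fintype T]
    [DecidableEq T] [NormedAddCommGroup E] [InnerProductSpace ℝ E]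
    (N K : ℕ) (y : S → T)
    (e : S → E) (v : T → E) (h : T → E) (m : E) (mr : T → E)
    (hm : m = (1 / ((N : ℝ) * (K : ℝ))) • ∑ s, e s)
    (hmr : ∀ r : T, mr r = (1 / (K : ℝ)) • ∑ s ∈ Finset.univ.filter (fun s => y s = r), e s) :
    (1 / (K : ℝ)) * ∑ s, ⟪e s, v (y s)⟫ -
        (1 / (K : ℝ)) * ∑ s, (1 / (N : ℝ)) * ∑ r, ⟪e s, v r⟫ -
        (1 / 2) * ∑ r, ‖v r - h r‖ ^ 2 =
      ∑ r, (-(1 / 2) * ‖v r - (mr r + h r - m)‖ ^ 2) +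
        ∑ r, ((1 / 2) * ‖mr r + h r - m‖ ^ 2 - (1 / 2) * ‖h r‖ ^ 2) := by
  have class_term : (1 / (K : ℝ)) * ∑ s, ⟪e s, v (y s)⟫ = ∑ r, ⟪mr r, v r⟫ := by
    rw [sum_inner_comp_eq_sum_inner_sum_fiber, mul_sum]
    simp only [hmr, real_inner_smul_left]
  have mean_term : (1 / (K : ℝ)) * ∑ s, (1 / (N : ℝ)) * ∑ r, ⟪e s, v r⟫ = ∑ r, ⟪m, v r⟫ := by
    rw [hm]
    simp only [real_inner_smul_left, sum_inner, mul_sum]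
    rw [sum_comm]
    exact sum_congr rfl fun r _ => sum_congr rfl fun s _ => by ring
  calc _ = ∑ r, (⟪mr r - m, v r⟫ - 1 / 2 * ‖v r - h r‖ ^ 2) := by
        rw [class_term, mean_term, mul_sum, ← sum_sub_distrib, ← sum_sub_distrib]
        simp only [inner_sub_left]
    _ = _ := by
        rw [← sum_add_distrib]
        refine sum_congr rfl fun r _ => ?_
        rw [inner_sub_half_norm_sub_sq, sub_add_eq_add_sub]

/-- Rewriting step in the appendix: in the `N`-way `K`-shot setting, the quadratic lower
bound on the log-posterior equals, up to a constant independent of `v`, the sum over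
relations of `−(1/2)` times the squared distance from `v r` to `m_r + h r − m`. -/
theorem quadratic_lower_bound_rewriting {S T E : Type*} [Fintype S] [Fintype T]
    [DecidableEq T] [Nonempty T] [NormedAddCommGroup E] [InnerProductSpace ℝ E]
    (N K : ℕ) (hN : Fintype.card T = N) (hK : 0 < K) (y : S → T)
    (hfiber : ∀ r : T, (Finset.univ.filter (fun s => y s = r)).card = K)
    (e : S → E) (v : T → E) (h : T → E) (m : E) (mr : T → E)
    (hm : m = (1 / ((N : ℝ) * (K : ℝ))) • ∑ s, e s)
    (hmr : ∀ r : T, mr r = (1 / (K : ℝ)) • ∑ s ∈ Finset.univ.filter (fun s => y s = r), e s) :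
    (1 / (K : ℝ)) * ∑ s, ⟪e s, v (y s)⟫ -
        (1 / (K : ℝ)) * ∑ s, (1 / (N : ℝ)) * ∑ r, ⟪e s, v r⟫ -
        (1 / 2) * ∑ r, ‖v r - h r‖ ^ 2 =
      ∑ r, (-(1 / 2) * ‖v r - (mr r + h r - m)‖ ^ 2) +
        ∑ r, ((1 / 2) * ‖mr r + h r - m‖ ^ 2 - (1 / 2) * ‖h r‖ ^ 2) :=
  quadratic_lower_bound_rewriting_general N K y e v h m mr hm hmr
end

section
/- Consider an N-way K-shot support set: let T be a nonempty finite set of size N, K a positive natural number, S a finite set with labeling y : S → T such that the fiber y⁻¹(r) has cardinality K for every r ∈ T, encodings e : S → E in a real inner product space E, and embeddings h : T → E. Define m = (1/(N·K)) · ∑_{s ∈ S} e(s) and m_r = (1/K) · ∑_{s ∈ S, y(s) = r} e(s) for each r ∈ T. Then the function G mapping an assignment of prototype vectors v : T → E to G(v) = (1/K) · ∑_{s ∈ S} ⟪e(s), v(y(s))⟫ − (1/K) · ∑_{s ∈ S} (1/N) · ∑_{r ∈ T} ⟪e(s), v(r)⟫ − (1/2) · ∑_{r ∈ T} ‖v(r)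 − h(r)‖² attains its maximum precisely at the assignment v*(r) = m_r + h(r) − m; that is, G(v) ≤ G(v*) for every v : T → E, with equality if and only if v(r) = m_r + h(r) − m for all r ∈ T. -/
open Finset Real
open scoped RealInnerProductSpace

/-- Main appendix claim: in the `N`-way `K`-shot setting, the quadratic lower bound `G`
on the log-posterior of the prototype vectors is uniquely maximized by the assignment
`v* r = m_r + h r − m`. -/
theorem quadratic_lower_bound_maximized_at_initialization {S T E : Type*} [Fintype S]
    [Fintype T] [DecidableEq T] [Nonempty T] [NormedAddCommGroup E]
    [InnerProductSpace ℝ E] (N K : ℕ) (hN : Fintype.card T = N) (hK : 0 < K) (y : S → T)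
    (hfiber : ∀ r : T, (Finset.univ.filter (fun s => y s = r)).card = K)
    (e : S → E) (h : T → E) (m : E) (mr : T → E)
    (hm : m = (1 / ((N : ℝ) * (K : ℝ))) • ∑ s, e s)
    (hmr : ∀ r : T, mr r = (1 / (K : ℝ)) • ∑ s ∈ Finset.univ.filter (fun s => y s = r), e s)
    (G : (T → E) → ℝ)
    (hG : ∀ v : T → E, G v = (1 / (K : ℝ)) * ∑ s, ⟪e s, v (y s)⟫ -
        (1 / (K : ℝ)) * ∑ s, (1 / (N : ℝ)) * ∑ r, ⟪e s, v r⟫ -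
        (1 / 2) * ∑ r, ‖v r - h r‖ ^ 2) :
    (∀ v : T → E, G v ≤ G (fun r => mr r + h r - m)) ∧
      (∀ v : T → E, G v = G (fun r => mr r + h r - m) ↔
        ∀ r : T, v r = mr r + h r - m) := by
  have hNpos : (0 : ℝ) < (N : ℝ) := by
    have : 0 < Fintype.card T := Fintype.card_pos
    rw [hN] at this
    exact_mod_cast this
  have hKpos : (0 : ℝ) < (K : ℝ) := by exact_mod_cast hK
  -- Rewrite G in a per-relation form
  have hGv : ∀ v : T → E,
      G v = ∑ r, (⟪mr r - m, v r⟫ - (1 / 2) * ‖v r - h r‖ ^ 2) := by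
    intro v
    rw [hG]
    have h1 : (1 / (K : ℝ)) * ∑ s, ⟪e s, v (y s)⟫ = ∑ r, ⟪mr r, v r⟫ := by
      rw [← Finset.sum_fiberwise Finset.univ y (fun s => ⟪e s, v (y s)⟫)]
      rw [Finset.mul_sum]
      refine Finset.sum_congr rfl fun r _ => ?_
      have : ∑ s ∈ Finset.univ.filter (fun s => y s = r), ⟪e s, v (y s)⟫
          = ∑ s ∈ Finset.univ.filter (fun s => y s = r), ⟪e s, v r⟫ := by
        refine Finset.sum_congr rfl fun s hs => ?_
        rw [(Finset.mem_filter.mp hs).2]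
      rw [this, ← sum_inner, hmr r, real_inner_smul_left]
    have h2 : (1 / (K : ℝ)) * ∑ s, (1 / (N : ℝ)) * ∑ r, ⟪e s, v r⟫
        = ∑ r, ⟪m, v r⟫ := by
      have : ∑ s, (1 / (N : ℝ)) * ∑ r, ⟪e s, v r⟫
          = (1 / (N : ℝ)) * ∑ r, ⟪∑ s, e s, v r⟫ := by
        rw [← Finset.mul_sum, Finset.sum_comm]
        congr 1
        refine Finset.sum_congr rfl fun r _ => ?_
        rw [sum_inner]
      rw [this, hm]
      simp only [Finset.mul_sum]
      refine Finset.sum_congr rfl fun r _ => ?_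
      rw [real_inner_smul_left]
      ring
    rw [h1, h2]
    rw [Finset.mul_sum, ← Finset.sum_sub_distrib, ← Finset.sum_sub_distrib]
    refine Finset.sum_congr rfl fun r _ => ?_
    rw [inner_sub_left]
  -- Key identity: G v = G v* − (1/2)·∑ ‖v r − v* r‖²
  set vs : T → E := fun r => mr r + h r - m with hvs
  have key : ∀ v : T → E,
      G v = G vs - (1 / 2) * ∑ r, ‖v r - vs r‖ ^ 2 := by
    intro v
    rw [hGv v, hGv vs, Finset.mul_sum, ← Finset.sum_sub_distrib]
    refine Finset.sum_congr rfl fun r _ => ?_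
    have e1 : ‖v r - h r‖ ^ 2 = ‖v r‖ ^ 2 - 2 * ⟪v r, h r⟫ + ‖h r‖ ^ 2 :=
      norm_sub_sq_real _ _
    have e2 : ‖vs r - h r‖ ^ 2 = ‖vs r‖ ^ 2 - 2 * ⟪vs r, h r⟫ + ‖h r‖ ^ 2 :=
      norm_sub_sq_real _ _
    have e3 : ‖v r - vs r‖ ^ 2 = ‖v r‖ ^ 2 - 2 * ⟪v r, vs r⟫ + ‖vs r‖ ^ 2 :=
      norm_sub_sq_real _ _
    have e4 : vs r = (mr r - m) + h r := by simp [hvs]; abel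
    have e5 : ⟪v r, vs r⟫ = ⟪v r, mr r - m⟫ + ⟪v r, h r⟫ := by
      rw [e4, inner_add_right]
    have e6 : ⟪vs r, h r⟫ = ⟪mr r - m, h r⟫ + ⟪h r, h r⟫ := by
      rw [e4, inner_add_left]
    have e7 : ⟪mr r - m, vs r⟫ = ⟪mr r - m, mr r - m⟫ + ⟪mr r - m, h r⟫ := by
      rw [e4, inner_add_right]
    have e8 : ‖vs r‖ ^ 2 = ⟪mr r - m, mr r - m⟫ + 2 * ⟪mr r - m, h r⟫ + ⟪h r, h r⟫ := by
      rw [e4, @norm_add_sq_real, real_inner_self_eq_norm_sq, real_inner_self_eq_norm_sq]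
    have e9 : ⟪mr r - m, v r⟫ = ⟪v r, mr r - m⟫ := real_inner_comm _ _
    have e10 : ‖h r‖ ^ 2 = ⟪h r, h r⟫ := (real_inner_self_eq_norm_sq _).symm
    rw [e1, e2, e3, e5, e6, e7, e8, e9, e10]
    ring
  refine ⟨fun v => ?_, fun v => ?_⟩
  · rw [key v]
    have : (0 : ℝ) ≤ ∑ r, ‖v r - vs r‖ ^ 2 :=
      Finset.sum_nonneg fun r _ => sq_nonneg _
    linarith
  · rw [key v]
    constructor
    · intro hEq
      have hsum : ∑ r, ‖v r - vs r‖ ^ 2 = 0 := by linarith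
      intro r
      have := (Finset.sum_eq_zero_iff_of_nonneg
        (fun r _ => sq_nonneg ‖v r - vs r‖)).mp hsum r (Finset.mem_univ r)
      have hnorm : ‖v r - vs r‖ = 0 := by
        nlinarith [norm_nonneg (v r - vs r)]
      have := norm_eq_zero.mp hnorm
      have : v r = vs r := by rwa [sub_eq_zero] at this
      simpa [hvs] using this
    · intro hAll
      have : ∑ r, ‖v r - vs r‖ ^ 2 = 0 := by
        refine Finset.sum_eq_zero fun r _ => ?_
        rw [hAll r]
        simp [hvs]
      rw [this]
      ring
end
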